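/- Let U ⊂ ℝ³ be an open connected neighborhood of the origin, with coordinates (x₁, x₂, t), and consider the vector fields X₁ = ∂_{x₁} − (x₂/2)∂_t and X₂ = ∂_{x₂} + (x₁/2)∂_t. Let A = (a_{ij}) be a real 2×2 matrix with columns A₁, A₂, let a = (a₁, a₂), b = (b₁, b₂) ∈ ℝ², define f_i(x₁, x₂, t) = a_{i1}x₁ + a_{i2}x₂ + a_i t + b_i for i = 1, 2, and let f₃ : U → ℝ be a smooth function. Then the contact equations X₁f₃ = ½(f₁ X₁f₂ − f₂ X₁f₁) and X₂f₃ = ½(f₁ X₂f₂ − f₂ X₂f₁) hold everywhere on U if and only if det(A₁ a) = det(A₂ a) = 0 and there exists τ ∈ ℝ such that f₃(x₁, x₂, t) = τ + (x₂ det(b A₂) + x₁ det(b A₁))/2 + t (det(b a)/2 + det A) on U; here det(u v) denotes the determinant of the 2×2 matrix with columns u, v ∈ ℝ². -/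

import Mathlib

/-!
Write `h₁, h₂` for the right-hand sides of the contact equations. Since `[X₁, X₂] = ∂_t`,
a solution satisfies `∂_t f₃ = X₁h₂ − X₂h₁`, and for affine `f₁, f₂` this is the affine
function `det A + det(b a)/2 + x₁ det(A₁ a) + x₂ det(A₂ a)`. As `∂_t` commutes with `X_i`,
differentiating `X_i f₃ = h_i` in `t` gives `det(A_i a) = −det(A_i a)/2`, so both
determinants vanish. Then `f₃` and the stated affine function have the same derivatives
along `X₁, X₂, ∂_t`, hence the same differential, and on the connected open set `U` they
differ by a constant.
-/

open MeasureTheory Topology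

/-- The horizontal vector fields of the Heisenberg group `ℍ¹` in coordinates
`p = (x₁, x₂, t)`, applied to a function `f`:
`X₁f = ∂_{x₁}f − (x₂/2)∂_t f` and `X₂f = ∂_{x₂}f + (x₁/2)∂_t f`. -/
noncomputable def XH (i : Fin 2) (f : ℝ × ℝ × ℝ → ℝ) (p : ℝ × ℝ × ℝ) : ℝ :=
  if i = 0 then fderiv ℝ f p (1, 0, 0) - p.2.1 / 2 * fderiv ℝ f p (0, 0, 1)
  else fderiv ℝ f p (0, 1, 0) + p.1 / 2 * fderiv ℝ f p (0, 0, 1)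

/-- `det(u v)`: determinant of the 2×2 matrix with columns `u, v ∈ ℝ²`. -/
def d2 (u v : Fin 2 → ℝ) : ℝ := u 0 * v 1 - u 1 * v 0

/-- The affine horizontal components `f_i(x₁,x₂,t) = a_{i1}x₁ + a_{i2}x₂ + a_i t + b_i`. -/
def faff (A : Matrix (Fin 2) (Fin 2) ℝ) (a b : Fin 2 → ℝ) (i : Fin 2)
    (p : ℝ × ℝ × ℝ) : ℝ :=
  A i 0 * p.1 + A i 1 * p.2.1 + a i * p.2.2 + b i

open Filter

theorem ContinuousLinearMap.ext_basis3 {L M : ℝ × ℝ × ℝ →L[ℝ] ℝ}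
    (h₁ : L (1, 0, 0) = M (1, 0, 0)) (h₂ : L (0, 1, 0) = M (0, 1, 0))
    (h₃ : L (0, 0, 1) = M (0, 0, 1)) : L = M := by
  refine prod_ext (ext_ring ?_) (prod_ext (ext_ring ?_) (ext_ring ?_))
  · simpa [Prod.mk_zero_zero] using h₁
  · simpa [Prod.mk_zero_zero] using h₂
  · simpa [Prod.mk_zero_zero] using h₃

section
variable {f g : ℝ × ℝ × ℝ → ℝ} {p : ℝ × ℝ × ℝ}

theorem XH_zero :
    XH 0 f = fun p => fderiv ℝ f p (1, 0, 0) - p.2.1 / 2 * fderiv ℝ f p (0, 0, 1) :=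
  funext fun _ => if_pos rfl

theorem XH_one :
    XH 1 f = fun p => fderiv ℝ f p (0, 1, 0) + p.1 / 2 * fderiv ℝ f p (0, 0, 1) :=
  funext fun _ => if_neg one_ne_zero

theorem Filter.EventuallyEq.XH_eq (h : f =ᶠ[𝓝 p] g) (i : Fin 2) : XH i f p = XH i g p := by
  simp only [XH, h.fderiv_eq]

theorem fderiv_eq_of_XH_eq (hX : ∀ i, XH i f p = XH i g p)
    (ht : fderiv ℝ f p (0, 0, 1) = fderiv ℝ g p (0, 0, 1)) : fderiv ℝ f p = fderiv ℝ g p := by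
  have h₀ := hX 0
  have h₁ := hX 1
  simp only [XH_zero, XH_one] at h₀ h₁
  refine ContinuousLinearMap.ext_basis3 ?_ ?_ ht
  · linear_combination h₀ + p.2.1 / 2 * ht
  · linear_combination h₁ - p.1 / 2 * ht

theorem XH_commutator (hf : ContDiffAt ℝ 2 f p) :
    XH 0 (XH 1 f) p - XH 1 (XH 0 f) p = fderiv ℝ f p (0, 0, 1) := by
  have hdiff : DifferentiableAt ℝ (fderiv ℝ f) p :=
    (hf.fderiv_right (m := 1) (by norm_num)).differentiableAt one_ne_zero
  have hsymm := hf.isSymmSndFDerivAt (by simp [minSmoothness_of_isRCLikeNormedField])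
  simp only [XH_zero, XH_one, div_eq_mul_inv]
  simp (disch := fun_prop) [fderiv_fun_add, fderiv_fun_sub, fderiv_fun_mul, fderiv_clm_apply,
    fderiv.fst, fderiv.snd]
  linear_combination hsymm (1, 0, 0) (0, 1, 0) + p.1 / 2 * hsymm (1, 0, 0) (0, 0, 1) +
    p.2.1 / 2 * hsymm (0, 1, 0) (0, 0, 1)

theorem fderiv_XH_vertical (hf : ContDiffAt ℝ 2 f p) (i : Fin 2) :
    fderiv ℝ (XH i f) p (0, 0, 1) = XH i (fun q => fderiv ℝ f q (0, 0, 1)) p := by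
  have hdiff : DifferentiableAt ℝ (fderiv ℝ f) p :=
    (hf.fderiv_right (m := 1) (by norm_num)).differentiableAt one_ne_zero
  have hsymm := hf.isSymmSndFDerivAt (by simp [minSmoothness_of_isRCLikeNormedField])
  fin_cases i <;> simp only [Fin.zero_eta, Fin.mk_one, XH_zero, XH_one, div_eq_mul_inv] <;>
    simp (disch := fun_prop) [fderiv_fun_add, fderiv_fun_sub, fderiv_fun_mul, fderiv_clm_apply,
      fderiv.fst, fderiv.snd]
  · linear_combination hsymm (0, 0, 1) (1, 0, 0)
  · linear_combination hsymm (0, 0, 1) (0, 1, 0)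

end

section
variable (A : Matrix (Fin 2) (Fin 2) ℝ) (a b : Fin 2 → ℝ)

noncomputable def contactRHS (i : Fin 2) (p : ℝ × ℝ × ℝ) : ℝ :=
  1 / 2 * (faff A a b 0 p * XH i (faff A a b 1) p - faff A a b 1 p * XH i (faff A a b 0) p)

noncomputable def contactCurl (p : ℝ × ℝ × ℝ) : ℝ :=
  A.det + d2 b a / 2 + p.1 * d2 (fun k => A k 0) a + p.2.1 * d2 (fun k => A k 1) a

noncomputable def contactLift (τ : ℝ) (p : ℝ × ℝ × ℝ) : ℝ :=
  τ + (p.2.1 * d2 b (fun k => A k 1) + p.1 * d2 b (fun k => A k 0)) / 2 +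
    p.2.2 * (d2 b a / 2 + A.det)

theorem fderiv_faff (k : Fin 2) (p v : ℝ × ℝ × ℝ) :
    fderiv ℝ (faff A a b k) p v = A k 0 * v.1 + A k 1 * v.2.1 + a k * v.2.2 := by
  unfold faff
  simp (disch := fun_prop) [fderiv_fun_add, fderiv_fun_mul, fderiv.fst, fderiv.snd]

theorem contactRHS_zero : contactRHS A a b 0 = fun p =>
    1 / 2 * (faff A a b 0 p * (A 1 0 - p.2.1 / 2 * a 1) -
      faff A a b 1 p * (A 0 0 - p.2.1 / 2 * a 0)) := by
  ext p
  simp [contactRHS, XH_zero, fderiv_faff]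

theorem contactRHS_one : contactRHS A a b 1 = fun p =>
    1 / 2 * (faff A a b 0 p * (A 1 1 + p.1 / 2 * a 1) -
      faff A a b 1 p * (A 0 1 + p.1 / 2 * a 0)) := by
  ext p
  simp [contactRHS, XH_one, fderiv_faff]

theorem XH_contactRHS_commutator (p : ℝ × ℝ × ℝ) :
    XH 0 (contactRHS A a b 1) p - XH 1 (contactRHS A a b 0) p = contactCurl A a b p := by
  simp only [XH_zero, XH_one, contactRHS_zero, contactRHS_one, faff, div_eq_mul_inv]
  simp (disch := fun_prop) [fderiv_fun_add, fderiv_fun_sub, fderiv_fun_mul, fderiv.fst,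
    fderiv.snd, contactCurl, d2, Matrix.det_fin_two]
  ring

theorem fderiv_contactRHS_vertical (i : Fin 2) (p : ℝ × ℝ × ℝ) :
    fderiv ℝ (contactRHS A a b i) p (0, 0, 1) = -(d2 (fun k => A k i) a / 2) := by
  fin_cases i <;>
    simp only [Fin.zero_eta, Fin.mk_one, contactRHS_zero, contactRHS_one, faff, div_eq_mul_inv] <;>
    simp (disch := fun_prop) [fderiv_fun_add, fderiv_fun_sub, fderiv_fun_mul, fderiv.fst,
      fderiv.snd, d2] <;>
    ring

theorem fderiv_contactCurl (p v : ℝ × ℝ × ℝ) :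
    fderiv ℝ (contactCurl A a b) p v =
      v.1 * d2 (fun k => A k 0) a + v.2.1 * d2 (fun k => A k 1) a := by
  unfold contactCurl
  simp (disch := fun_prop) [fderiv_fun_add, fderiv_fun_mul, fderiv.fst, fderiv.snd]
  ring

theorem fderiv_contactLift (τ : ℝ) (p v : ℝ × ℝ × ℝ) :
    fderiv ℝ (contactLift A a b τ) p v = (v.2.1 * d2 b (fun k => A k 1) +
      v.1 * d2 b (fun k => A k 0)) / 2 + v.2.2 * (d2 b a / 2 + A.det) := by
  unfold contactLift
  simp only [div_eq_mul_inv]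
  simp (disch := fun_prop) [fderiv_fun_add, fderiv_fun_mul, fderiv.fst, fderiv.snd]
  ring

theorem XH_contactCurl (i : Fin 2) (p : ℝ × ℝ × ℝ) :
    XH i (contactCurl A a b) p = d2 (fun k => A k i) a := by
  fin_cases i <;> simp [XH_zero, XH_one, fderiv_contactCurl]

theorem XH_contactLift (h₀ : d2 (fun k => A k 0) a = 0) (h₁ : d2 (fun k => A k 1) a = 0)
    (τ : ℝ) (i : Fin 2) (p : ℝ × ℝ × ℝ) :
    XH i (contactLift A a b τ) p = contactRHS A a b i p := by
  simp only [d2] at h₀ h₁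
  fin_cases i
  · simp [XH_zero, fderiv_contactLift, contactRHS_zero, faff, d2, Matrix.det_fin_two]
    linear_combination (p.2.2 / 2 + p.1 * p.2.1 / 4) * h₀ + p.2.1 * p.2.1 / 4 * h₁
  · simp [XH_one, fderiv_contactLift, contactRHS_one, faff, d2, Matrix.det_fin_two]
    linear_combination -(p.1 * p.1 / 4) * h₀ + (p.2.2 / 2 - p.1 * p.2.1 / 4) * h₁
end

section
variable {U : Set (ℝ × ℝ × ℝ)} {f : ℝ × ℝ × ℝ → ℝ} {A : Matrix (Fin 2) (Fin 2) ℝ}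
  {a b : Fin 2 → ℝ}

theorem fderiv_vertical_eq_contactCurl (hU : IsOpen U) (hf : ContDiffOn ℝ 2 f U)
    (hcontact : ∀ p ∈ U, ∀ i, XH i f p = contactRHS A a b i p) {p : ℝ × ℝ × ℝ} (hp : p ∈ U) :
    fderiv ℝ f p (0, 0, 1) = contactCurl A a b p := by
  have hX (i : Fin 2) : XH i f =ᶠ[𝓝 p] contactRHS A a b i :=
    eventuallyEq_of_mem (hU.mem_nhds hp) fun q hq => hcontact q hq i
  rw [← XH_commutator (hf.contDiffAt (hU.mem_nhds hp)), (hX 1).XH_eq, (hX 0).XH_eq,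
    XH_contactRHS_commutator]

theorem d2_col_eq_zero_of_contact (hU : IsOpen U) (hf : ContDiffOn ℝ 2 f U)
    (hcontact : ∀ p ∈ U, ∀ i, XH i f p = contactRHS A a b i p) {p : ℝ × ℝ × ℝ} (hp : p ∈ U)
    (i : Fin 2) : d2 (fun k => A k i) a = 0 := by
  have hX : XH i f =ᶠ[𝓝 p] contactRHS A a b i :=
    eventuallyEq_of_mem (hU.mem_nhds hp) fun q hq => hcontact q hq i
  have hcurl : (fun q => fderiv ℝ f q (0, 0, 1)) =ᶠ[𝓝 p] contactCurl A a b :=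
    eventuallyEq_of_mem (hU.mem_nhds hp) fun q hq =>
      fderiv_vertical_eq_contactCurl hU hf hcontact hq
  have h₁ : fderiv ℝ (XH i f) p (0, 0, 1) = -(d2 (fun k => A k i) a / 2) := by
    rw [hX.fderiv_eq, fderiv_contactRHS_vertical]
  have h₂ : fderiv ℝ (XH i f) p (0, 0, 1) = d2 (fun k => A k i) a := by
    rw [fderiv_XH_vertical (hf.contDiffAt (hU.mem_nhds hp)), hcurl.XH_eq, XH_contactCurl]
  linarith

theorem exists_eqOn_contactLift_of_contact (hU : IsOpen U) (hU' : IsPreconnected U)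
    (hf : ContDiffOn ℝ 2 f U) (hcontact : ∀ p ∈ U, ∀ i, XH i f p = contactRHS A a b i p)
    (h₀ : d2 (fun k => A k 0) a = 0) (h₁ : d2 (fun k => A k 1) a = 0) :
    ∃ τ, U.EqOn f (contactLift A a b τ) := by
  have hfderiv (p) (hp : p ∈ U) : fderiv ℝ f p = fderiv ℝ (contactLift A a b 0) p := by
    refine fderiv_eq_of_XH_eq (fun i => by rw [hcontact p hp i, XH_contactLift A a b h₀ h₁]) ?_
    rw [fderiv_vertical_eq_contactCurl hU hf hcontact hp, fderiv_contactLift]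
    simp [contactCurl, h₀, h₁, add_comm]
  obtain ⟨τ, hτ⟩ := hU.exists_eq_add_of_fderiv_eq hU' (hf.differentiableOn (by norm_num))
    (by unfold contactLift; fun_prop) hfderiv
  refine ⟨τ, fun p hp => (hτ hp).trans ?_⟩
  simp only [contactLift]
  ring

theorem contact_of_eqOn_contactLift (hU : IsOpen U) (h₀ : d2 (fun k => A k 0) a = 0)
    (h₁ : d2 (fun k => A k 1) a = 0) {τ : ℝ} (hf : U.EqOn f (contactLift A a b τ)) :
    ∀ p ∈ U, ∀ i, XH i f p = contactRHS A a b i p := fun p hp i => by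
  rw [(eventuallyEq_of_mem (hU.mem_nhds hp) hf).XH_eq, XH_contactLift A a b h₀ h₁]

end

theorem stmt9_general (U : Set (ℝ × ℝ × ℝ)) (hUopen : IsOpen U) (hUconn : IsConnected U)
    (A : Matrix (Fin 2) (Fin 2) ℝ) (a b : Fin 2 → ℝ)
    (f₃ : ℝ × ℝ × ℝ → ℝ) (hf₃ : ContDiffOn ℝ (⊤ : ℕ∞) f₃ U) :
    (∀ p ∈ U, ∀ i : Fin 2,
        XH i f₃ p = 1 / 2 *
          (faff A a b 0 p * XH i (faff A a b 1) p -
            faff A a b 1 p * XH i (faff A a b 0) p))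
    ↔ (d2 (fun i => A i 0) a = 0 ∧ d2 (fun i => A i 1) a = 0 ∧
        ∃ τ : ℝ, ∀ p ∈ U,
          f₃ p = τ +
            (p.2.1 * d2 b (fun i => A i 1) + p.1 * d2 b (fun i => A i 0)) / 2 +
            p.2.2 * (d2 b a / 2 + A.det)) := by
  constructor
  · intro hcontact
    have hf : ContDiffOn ℝ 2 f₃ U := hf₃.of_le (WithTop.coe_le_coe.2 le_top)
    obtain ⟨p₀, hp₀⟩ := hUconn.nonempty
    have h₀ := d2_col_eq_zero_of_contact hUopen hf hcontact hp₀ 0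
    have h₁ := d2_col_eq_zero_of_contact hUopen hf hcontact hp₀ 1
    exact ⟨h₀, h₁,
      exists_eqOn_contactLift_of_contact hUopen hUconn.isPreconnected hf hcontact h₀ h₁⟩
  · rintro ⟨h₀, h₁, τ, hτ⟩
    exact contact_of_eqOn_contactLift hUopen h₀ h₁ hτ

/-- characterization of the smooth Lipschitz mappings of `ℍ¹` with affine
horizontal components; the contact equations `X_i f₃ = ½(f₁ X_i f₂ − f₂ X_i f₁)` hold on
`U` iff `det(A₁ a) = det(A₂ a) = 0` and `f₃` has the stated explicit affine form. -/
theorem stmt9 (U : Set (ℝ × ℝ × ℝ)) (hUopen : IsOpen U) (hUconn : IsConnected U)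
    (hU0 : ((0 : ℝ), (0 : ℝ), (0 : ℝ)) ∈ U)
    (A : Matrix (Fin 2) (Fin 2) ℝ) (a b : Fin 2 → ℝ)
    (f₃ : ℝ × ℝ × ℝ → ℝ) (hf₃ : ContDiffOn ℝ (⊤ : ℕ∞) f₃ U) :
    (∀ p ∈ U, ∀ i : Fin 2,
        XH i f₃ p = 1 / 2 *
          (faff A a b 0 p * XH i (faff A a b 1) p -
            faff A a b 1 p * XH i (faff A a b 0) p))
    ↔ (d2 (fun i => A i 0) a = 0 ∧ d2 (fun i => A i 1) a = 0 ∧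
        ∃ τ : ℝ, ∀ p ∈ U,
          f₃ p = τ +
            (p.2.1 * d2 b (fun i => A i 1) + p.1 * d2 b (fun i => A i 0)) / 2 +
            p.2.2 * (d2 b a / 2 + A.det)) :=
  stmt9_general U hUopen hUconn A a b f₃ hf₃
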